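/- For every n ≥ 0 and every 0 ≤ k ≤ n, the coefficient of q^k in the formal power series F_n(q)/F_{n+1}(q) equals (-1)^k times the k-th Catalan number C_k. -/

import Mathlib

/-!
Writing `R n = F_n / F_{n+1}`, the recurrence gives `R (n+1) * (1 + q R n) = 1`, while the
signed Catalan series `G(q) = C(-q)` satisfies `G * (1 + q G) = 1` (from `C = 1 + q C²`).
Both are fixed points of `f ↦ 1 / (1 + q f)`, and this map raises the `q`-adic order of a
difference by one: `a - c = a c q (d - b)`. As `R 0 = 1 ≡ G mod q`, induction gives
`R n ≡ G mod q^(n+1)`.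
-/

open PowerSeries

noncomputable def qFibS : ℕ → PowerSeries ℚ
  | 0 => 1
  | 1 => 1
  | n + 2 => qFibS (n + 1) + PowerSeries.X * qFibS n

theorem pow_succ_dvd_sub_of_mul_one_add_mul_eq_one {R : Type*} [CommRing R] {x a b c d : R}
    {n : ℕ} (ha : a * (1 + x * b) = 1) (hc : c * (1 + x * d) = 1) (hbd : x ^ n ∣ b - d) :
    x ^ (n + 1) ∣ a - c := by
  have hsub : a - c = x * (d - b) * (a * c) := by
    linear_combination c * ha - a * hc
  rw [hsub, pow_succ']
  exact (mul_dvd_mul_left x (dvd_sub_comm.mp hbd)).mul_right _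

namespace PowerSeries

noncomputable def signedCatalanSeries : ℚ⟦X⟧ := mk fun k => (-1) ^ k * (catalan k : ℚ)

@[simp]
theorem coeff_signedCatalanSeries (k : ℕ) :
    coeff k signedCatalanSeries = (-1) ^ k * (catalan k : ℚ) := by
  simp [signedCatalanSeries]

theorem signedCatalanSeries_mul_one_add_X_mul :
    signedCatalanSeries * (1 + X * signedCatalanSeries) = 1 := by
  have hG : signedCatalanSeries = rescale (-1) (map (Nat.castRingHom ℚ) catalanSeries) := by
    ext k
    simp [coeff_rescale]
  have h := congrArg (fun f => rescale (-1 : ℚ) (map (Nat.castRingHom ℚ) f))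
    catalanSeries_sq_mul_X_add_one
  simp only [map_add, map_mul, map_pow, map_X, map_one, rescale_X, ← hG, map_neg, neg_mul,
    one_mul] at h
  linear_combination -h

end PowerSeries

theorem constantCoeff_qFibS : ∀ n, constantCoeff (qFibS n) = 1
  | 0 => by simp [qFibS]
  | 1 => by simp [qFibS]
  | n + 2 => by simp [qFibS, constantCoeff_qFibS (n + 1)]

noncomputable def qFibRatio (n : ℕ) : ℚ⟦X⟧ := qFibS n * (qFibS (n + 1))⁻¹

theorem qFibRatio_succ_mul_one_add_X_mul (n : ℕ) :
    qFibRatio (n + 1) * (1 + X * qFibRatio n) = 1 := by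
  have hinv (m : ℕ) : qFibS m * (qFibS m)⁻¹ = 1 :=
    PowerSeries.mul_inv_cancel _ (by simp [constantCoeff_qFibS])
  calc qFibRatio (n + 1) * (1 + X * qFibRatio n)
      = (qFibS (n + 1) + X * qFibS n * (qFibS (n + 1) * (qFibS (n + 1))⁻¹))
          * (qFibS (n + 2))⁻¹ := by unfold qFibRatio; ring
    _ = 1 := by rw [hinv, mul_one]; exact hinv (n + 2)

theorem X_pow_succ_dvd_qFibRatio_sub_signedCatalanSeries (n : ℕ) :
    X ^ (n + 1) ∣ qFibRatio n - signedCatalanSeries := by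
  induction n with
  | zero =>
    rw [zero_add, pow_one, X_dvd_iff, map_sub, ← coeff_zero_eq_constantCoeff_apply,
      ← coeff_zero_eq_constantCoeff_apply]
    simp [qFibRatio, qFibS]
  | succ n ih =>
    exact pow_succ_dvd_sub_of_mul_one_add_mul_eq_one (qFibRatio_succ_mul_one_add_X_mul n)
      signedCatalanSeries_mul_one_add_X_mul ih

theorem qFib_ratio_catalan (n k : ℕ) (hk : k ≤ n) :
    PowerSeries.coeff (R := ℚ) k (qFibS n * (qFibS (n + 1))⁻¹) = (-1) ^ k * catalan k := by
  have h := X_pow_dvd_iff.mp (X_pow_succ_dvd_qFibRatio_sub_signedCatalanSeries n) k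
    (Nat.lt_succ_of_le hk)
  rw [map_sub, sub_eq_zero, coeff_signedCatalanSeries] at h
  exact h
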